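/- arXiv:1812.11417 — 8 statements merged into one kernel-verified Lean document; each statement's English description precedes it below -/
import Mathlib

section
/- (Lemma 1, dynamical part.) If N₁ > 0, N₂ > 0 and N₃ ≥ 0, then there exist real numbers S_∞ and R_∞ with 0 < S_∞ < N₁ such that, as t → ∞, S(t) → S_∞, I(t) → 0 and R(t) → R_∞ = N − S_∞; moreover R_∞ satisfies the fixed-point equation R_∞ = −(γ/β)·ln(N − R_∞) + C_R, where C_R = N₃ + (γ/β)·ln N₁. -/
/-!
Along a solution, `S + I + R` and `S · exp ((β/γ) R)` are conserved, and
`I = I(0) · exp (∫ (β S - γ))` stays positive. Hence `R` is strictly increasing and bounded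
by `N`, so it converges; then `S = N₁ exp ((β/γ)(N₃ - R))` and `I = N - S - R` converge too.
Since `R' = γ I` converges while `R` does, the mean value theorem forces `lim I = 0`, and
`S_∞ = N₁ exp ((β/γ)(N₃ - R_∞))` is exactly the fixed-point equation.
-/

open Filter Topology Set

theorem eq_of_hasDerivAt_zero_Ici {f : ℝ → ℝ} {a : ℝ} (hf : ∀ t, a ≤ t → HasDerivAt f 0 t) :
    ∀ t, a ≤ t → f t = f a := fun t ht =>
  constant_of_has_deriv_right_zero
    (fun x hx => (hf x hx.1).continuousAt.continuousWithinAt)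
    (fun x hx => (hf x hx.1).hasDerivWithinAt) t ⟨ht, le_rfl⟩

theorem pos_of_hasDerivAt_mul_self_Ici {f g : ℝ → ℝ} {a : ℝ} (hg : ContinuousOn g (Ici a))
    (hf : ∀ t, a ≤ t → HasDerivAt f (g t * f t) t) (ha : 0 < f a) :
    ∀ t, a ≤ t → 0 < f t := by
  -- integrating factor `exp (-A)` with `A' = g` on `[a, ∞)`, after extending `g` continuously
  set G : ℝ → ℝ := fun u => g (max u a)
  have hG : Continuous G :=
    hg.comp_continuous (continuous_id.max continuous_const) fun u => le_max_right u a
  set A : ℝ → ℝ := fun t => ∫ u in a..t, G u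
  have hA : ∀ t, HasDerivAt A (G t) t := fun t => (hG.integral_hasStrictDerivAt a t).hasDerivAt
  have hconst : ∀ t, a ≤ t → f t * Real.exp (-A t) = f a * Real.exp (-A a) := by
    refine eq_of_hasDerivAt_zero_Ici fun t ht => ((hf t ht).mul (hA t).neg.exp).congr_deriv ?_
    simp only [G, max_eq_left ht]
    ring
  intro t ht
  have h := hconst t ht
  have hpos : 0 < f a * Real.exp (-A a) := by positivity
  exact pos_of_mul_pos_left (h ▸ hpos) (Real.exp_pos _).le

theorem exists_tendsto_atTop_of_monotoneOn_Ici {f : ℝ → ℝ} {a M : ℝ} (hf : MonotoneOn f (Ici a))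
    (hM : ∀ t, a ≤ t → f t ≤ M) : ∃ L, Tendsto f atTop (𝓝 L) ∧ ∀ t, a ≤ t → f t ≤ L := by
  set F : ℝ → ℝ := fun t => f (max t a)
  have hF : Monotone F := fun s t hst =>
    hf (le_max_right s a) (le_max_right t a) (max_le_max hst le_rfl)
  have hbdd : BddAbove (range F) := ⟨M, by rintro _ ⟨t, rfl⟩; exact hM _ (le_max_right t a)⟩
  have hFf : F =ᶠ[atTop] f := by
    filter_upwards [eventually_ge_atTop a] with t ht
    simp only [F, max_eq_left ht]
  have hlim := tendsto_atTop_ciSup hF hbdd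
  refine ⟨_, hlim.congr' hFf, fun t ht => ?_⟩
  simpa only [F, max_eq_left ht] using hF.ge_of_tendsto hlim t

theorem eq_zero_of_tendsto_of_tendsto_deriv {f f' : ℝ → ℝ} {a L : ℝ}
    (hf : ∀ᶠ t in atTop, HasDerivAt f (f' t) t) (hfa : Tendsto f atTop (𝓝 a))
    (hf' : Tendsto f' atTop (𝓝 L)) : L = 0 := by
  -- by the mean value theorem `f (t + 1) - f t` is a value of `f'` at a point beyond `t`
  have hincr : Tendsto (fun t => f (t + 1) - f t) atTop (𝓝 0) := by
    simpa using (hfa.comp (tendsto_atTop_add_const_right atTop 1 tendsto_id)).sub hfa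
  have hmvt : ∀ᶠ t in atTop, ∃ c, t < c ∧ f' c = f (t + 1) - f t := by
    obtain ⟨T, hT⟩ := eventually_atTop.1 hf
    filter_upwards [eventually_ge_atTop T] with t ht
    obtain ⟨c, hc, hfc⟩ := exists_hasDerivAt_eq_slope f f' (lt_add_one t)
      (fun x hx => (hT x (ht.trans hx.1)).continuousAt.continuousWithinAt)
      (fun x hx => hT x (ht.trans hx.1.le))
    exact ⟨c, hc.1, by simpa using hfc⟩
  refine tendsto_nhds_unique (Metric.tendsto_nhds.2 fun ε hε => ?_) hincr
  obtain ⟨T, hT⟩ := eventually_atTop.1 (Metric.tendsto_nhds.1 hf' ε hε)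
  filter_upwards [hmvt, eventually_ge_atTop T] with t ⟨c, htc, hc⟩ ht
  exact hc ▸ hT c (ht.trans htc.le)

section SIR

variable {β γ : ℝ} {S I R : ℝ → ℝ}

theorem sir_add_add_eq (hS : ∀ t, 0 ≤ t → HasDerivAt S (-β * I t * S t) t)
    (hI : ∀ t, 0 ≤ t → HasDerivAt I (β * I t * S t - γ * I t) t)
    (hR : ∀ t, 0 ≤ t → HasDerivAt R (γ * I t) t) :
    ∀ t, 0 ≤ t → S t + I t + R t = S 0 + I 0 + R 0 :=
  eq_of_hasDerivAt_zero_Ici (f := fun t => S t + I t + R t) fun t ht =>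
    (((hS t ht).add (hI t ht)).add (hR t ht)).congr_deriv (by ring)

theorem sir_S_eq_mul_exp (hγ : γ ≠ 0) (hS : ∀ t, 0 ≤ t → HasDerivAt S (-β * I t * S t) t)
    (hR : ∀ t, 0 ≤ t → HasDerivAt R (γ * I t) t) :
    ∀ t, 0 ≤ t → S t = S 0 * Real.exp (β / γ * (R 0 - R t)) := by
  have hconst : ∀ t, 0 ≤ t →
      S t * Real.exp (β / γ * R t) = S 0 * Real.exp (β / γ * R 0) := by
    refine eq_of_hasDerivAt_zero_Ici (f := fun t => S t * Real.exp (β / γ * R t)) fun t ht =>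
      ((hS t ht).mul ((hR t ht).const_mul (β / γ)).exp).congr_deriv ?_
    field_simp
    ring
  intro t ht
  rw [mul_sub, Real.exp_sub, ← mul_div_assoc, ← hconst t ht,
    mul_div_cancel_right₀ _ (by positivity)]

theorem sir_I_pos (hS : ∀ t, 0 ≤ t → HasDerivAt S (-β * I t * S t) t)
    (hI : ∀ t, 0 ≤ t → HasDerivAt I (β * I t * S t - γ * I t) t) (hI0 : 0 < I 0) :
    ∀ t, 0 ≤ t → 0 < I t :=
  pos_of_hasDerivAt_mul_self_Ici (g := fun t => β * S t - γ)
    (fun t ht =>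
      ((hS t ht).continuousAt.continuousWithinAt.const_smul β).sub continuousWithinAt_const)
    (fun t ht => (hI t ht).congr_deriv (by ring)) hI0

theorem sir_R_strictMonoOn (hγ : 0 < γ) (hR : ∀ t, 0 ≤ t → HasDerivAt R (γ * I t) t)
    (hIpos : ∀ t, 0 ≤ t → 0 < I t) : StrictMonoOn R (Ici 0) :=
  strictMonoOn_of_deriv_pos (convex_Ici 0)
    (fun t ht => (hR t ht).continuousAt.continuousWithinAt) fun t ht => by
      rw [interior_Ici, mem_Ioi] at ht
      exact (hR t ht.le).deriv ▸ mul_pos hγ (hIpos t ht.le)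

end SIR

theorem sir_steady_state_limit_general
    (β γ : ℝ) (hβ : 0 < β) (hγ : 0 < γ)
    (S I R : ℝ → ℝ) (N₁ N₂ N₃ N : ℝ)
    (hS : ∀ t, 0 ≤ t → HasDerivAt S (-β * I t * S t) t)
    (hI : ∀ t, 0 ≤ t → HasDerivAt I (β * I t * S t - γ * I t) t)
    (hR : ∀ t, 0 ≤ t → HasDerivAt R (γ * I t) t)
    (hS0 : S 0 = N₁) (hI0 : I 0 = N₂) (hR0 : R 0 = N₃)
    (hN : N = N₁ + N₂ + N₃)
    (hN₁ : 0 < N₁) (hN₂ : 0 < N₂) :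
    ∃ Sinf Rinf : ℝ, 0 < Sinf ∧ Sinf < N₁ ∧
      Tendsto S atTop (𝓝 Sinf) ∧
      Tendsto I atTop (𝓝 0) ∧
      Tendsto R atTop (𝓝 Rinf) ∧
      Rinf = N - Sinf ∧
      Rinf = -(γ / β) * Real.log (N - Rinf) + (N₃ + (γ / β) * Real.log N₁) := by
  have hIpos := sir_I_pos hS hI (hI0 ▸ hN₂)
  have hSexp := sir_S_eq_mul_exp hγ.ne' hS hR
  have hsum := sir_add_add_eq hS hI hR
  rw [hS0, hI0, hR0, ← hN] at hsum
  rw [hS0, hR0] at hSexp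
  have hRmono := sir_R_strictMonoOn hγ hR hIpos
  obtain ⟨Rinf, hRT, hRle⟩ := exists_tendsto_atTop_of_monotoneOn_Ici hRmono.monotoneOn
    fun t ht => by
      nlinarith [hsum t ht, hIpos t ht, hSexp t ht, Real.exp_pos (β / γ * (N₃ - R t))]
  set Sinf := N₁ * Real.exp (β / γ * (N₃ - Rinf))
  have hST : Tendsto S atTop (𝓝 Sinf) :=
    (((Real.continuous_exp.tendsto _).comp ((tendsto_const_nhds.sub hRT).const_mul _)).const_mul
      _).congr' (eventually_atTop.2 ⟨0, fun t ht => (hSexp t ht).symm⟩)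
  have hIT : Tendsto I atTop (𝓝 (N - Sinf - Rinf)) :=
    ((tendsto_const_nhds.sub hST).sub hRT).congr'
      (eventually_atTop.2 ⟨0, fun t ht => by linarith [hsum t ht]⟩)
  have hIinf : N - Sinf - Rinf = 0 := by
    have := eq_zero_of_tendsto_of_tendsto_deriv (eventually_atTop.2 ⟨0, hR⟩) hRT (hIT.const_mul γ)
    exact (mul_eq_zero.1 this).resolve_left hγ.ne'
  have hRinf : N₃ < Rinf := hR0 ▸
    (hRmono (mem_Ici.2 le_rfl) (mem_Ici.2 zero_le_one) zero_lt_one).trans_le (hRle 1 zero_le_one)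
  have hSinf : Sinf < N₁ := mul_lt_of_lt_one_right hN₁ (Real.exp_lt_one_iff.2
    (mul_neg_of_pos_of_neg (by positivity) (by linarith)))
  refine ⟨Sinf, Rinf, by positivity, hSinf, hST, hIinf ▸ hIT, hRT, by linarith, ?_⟩
  rw [show N - Rinf = Sinf by linarith, Real.log_mul hN₁.ne' (Real.exp_ne_zero _), Real.log_exp]
  field_simp
  ring

/-- Lemma 1, dynamical part. There exist `S_∞`, `R_∞` with
`0 < S_∞ < N₁` such that `S → S_∞`, `I → 0`, `R → R_∞ = N - S_∞` as `t → ∞`,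
and `R_∞ = -(γ/β)·ln(N - R_∞) + C_R` with `C_R = N₃ + (γ/β)·ln N₁`. -/
theorem sir_steady_state_limit
    (β γ : ℝ) (hβ : 0 < β) (hγ : 0 < γ)
    (S I R : ℝ → ℝ) (N₁ N₂ N₃ N : ℝ)
    (hS : ∀ t, 0 ≤ t → HasDerivAt S (-β * I t * S t) t)
    (hI : ∀ t, 0 ≤ t → HasDerivAt I (β * I t * S t - γ * I t) t)
    (hR : ∀ t, 0 ≤ t → HasDerivAt R (γ * I t) t)
    (hS0 : S 0 = N₁) (hI0 : I 0 = N₂) (hR0 : R 0 = N₃)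
    (hN : N = N₁ + N₂ + N₃)
    (hN₁ : 0 < N₁) (hN₂ : 0 < N₂) (hN₃ : 0 ≤ N₃) :
    ∃ Sinf Rinf : ℝ, 0 < Sinf ∧ Sinf < N₁ ∧
      Tendsto S atTop (𝓝 Sinf) ∧
      Tendsto I atTop (𝓝 0) ∧
      Tendsto R atTop (𝓝 Rinf) ∧
      Rinf = N - Sinf ∧
      Rinf = -(γ / β) * Real.log (N - Rinf) + (N₃ + (γ / β) * Real.log N₁) :=
  sir_steady_state_limit_general β γ hβ hγ S I R N₁ N₂ N₃ N hS hI hR hS0 hI0 hR0 hN hN₁ hN₂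
end

section
/- (Lemma 1, uniqueness of the steady state.) For any reals β, γ > 0, N₁ > 0, N₂ > 0, the equation −S + (γ/β)·ln S + C_I = 0, where C_I = N₁ + N₂ − (γ/β)·ln N₁, has exactly one solution S in the open interval (0, γ/β). Equivalently, setting R = N − S with N = N₁ + N₂ + N₃, the equation R = −(γ/β)·ln(N − R) + N₃ + (γ/β)·ln N₁ has exactly one solution R with N − R ∈ (0, γ/β). -/
/-! With `a = γ/β`, the left-hand side `f S = -S + a ln S + C_I` has derivative `a/S - 1 > 0` on
`(0, a)`, so it is strictly increasing there. It tends to `-∞` as `S → 0⁺`, and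
`f a = N₂ + (N₁ - a - a ln (N₁/a)) ≥ N₂ > 0` by `ln x ≤ x - 1`; the intermediate value theorem
gives the root. The equation for `R` is the same equation after the substitution `S = N - R`. -/

open Real Set Filter Topology

theorem existsUnique_eq_of_strictMonoOn_Ioc {f : ℝ → ℝ} {l u y : ℝ} (hlu : l < u)
    (hcont : ContinuousOn f (Ioc l u)) (hmono : StrictMonoOn f (Ioc l u))
    (hlim : Tendsto f (𝓝[>] l) atBot) (hy : y < f u) :
    ∃! x ∈ Ioo l u, f x = y := by
  obtain ⟨x, hfx, hx⟩ :=
    ((hlim.eventually (eventually_lt_atBot y)).and (Ioo_mem_nhdsGT hlu)).exists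
  have hIcc : Icc x u ⊆ Ioc l u := Icc_subset_Ioc hx.1 le_rfl
  obtain ⟨c, hc, hfc⟩ := intermediate_value_Ioo hx.2.le (hcont.mono hIcc) ⟨hfx, hy⟩
  refine ⟨c, ⟨⟨hx.1.trans hc.1, hc.2⟩, hfc⟩, fun z ⟨hz, hfz⟩ => ?_⟩
  exact hmono.injOn (Ioo_subset_Ioc_self hz) (hIcc (Ioo_subset_Icc_self hc)) (hfz.trans hfc.symm)

theorem continuousOn_neg_add_mul_log_add (a C : ℝ) :
    ContinuousOn (fun x => -x + a * log x + C) (Ioi 0) :=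
  fun x hx => by fun_prop (disch := exact (mem_Ioi.mp hx).ne')

theorem strictMonoOn_neg_add_mul_log_add (a C : ℝ) :
    StrictMonoOn (fun x => -x + a * log x + C) (Ioc 0 a) := by
  refine strictMonoOn_of_deriv_pos (convex_Ioc 0 a)
    ((continuousOn_neg_add_mul_log_add a C).mono Ioc_subset_Ioi_self) fun x hx => ?_
  rw [interior_Ioc] at hx
  have hderiv : HasDerivAt (fun x => -x + a * log x + C) (-1 + a * x⁻¹) x :=
    (((hasDerivAt_id x).neg).add ((hasDerivAt_log hx.1.ne').const_mul a)).add_const C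
  rw [hderiv.deriv, ← div_eq_mul_inv]
  linarith [(one_lt_div hx.1).2 hx.2]

theorem tendsto_neg_add_mul_log_add_nhdsGT_zero {a : ℝ} (ha : 0 < a) (C : ℝ) :
    Tendsto (fun x => -x + a * log x + C) (𝓝[>] 0) atBot := by
  refine tendsto_atBot_add_const_right _ C ?_
  exact ((continuous_neg.tendsto 0).mono_left nhdsWithin_le_nhds).add_atBot
    (tendsto_log_nhdsGT_zero.const_mul_atBot ha)

theorem sir_steady_state_unique_general
    (β γ N₁ N₂ N₃ N : ℝ) (hβ : 0 < β) (hγ : 0 < γ)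
    (hN₁ : 0 < N₁) (hN₂ : 0 < N₂) (hN : N = N₁ + N₂ + N₃) :
    (∃! S : ℝ, S ∈ Set.Ioo 0 (γ / β) ∧
        -S + (γ / β) * Real.log S + (N₁ + N₂ - (γ / β) * Real.log N₁) = 0) ∧
    (∃! R : ℝ, (N - R) ∈ Set.Ioo 0 (γ / β) ∧
        R = -(γ / β) * Real.log (N - R) + (N₃ + (γ / β) * Real.log N₁)) := by
  set a := γ / β
  have ha : 0 < a := div_pos hγ hβ
  have hf_a : 0 < -a + a * log a + (N₁ + N₂ - a * log N₁) := by
    have := mul_le_mul_of_nonneg_left (log_le_sub_one_of_pos (div_pos hN₁ ha)) ha.le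
    rw [log_div hN₁.ne' ha.ne', mul_sub_one, mul_div_cancel₀ _ ha.ne'] at this
    linarith
  have hS := existsUnique_eq_of_strictMonoOn_Ioc ha
    ((continuousOn_neg_add_mul_log_add a _).mono Ioc_subset_Ioi_self)
    (strictMonoOn_neg_add_mul_log_add a _)
    (tendsto_neg_add_mul_log_add_nhdsGT_zero ha _) hf_a
  refine ⟨hS, ((Equiv.subLeft N).existsUnique_congr fun S => ?_).mp hS⟩
  simp only [Equiv.subLeft_apply, sub_sub_cancel, and_congr_right_iff]
  intro
  constructor <;> intro <;> linarith

/-- Lemma 1, uniqueness of the steady state. The equation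
`-S + (γ/β)·ln S + C_I = 0`, `C_I = N₁ + N₂ - (γ/β)·ln N₁`, has exactly one
solution `S ∈ (0, γ/β)`; equivalently, with `R = N - S`, the equation
`R = -(γ/β)·ln(N - R) + N₃ + (γ/β)·ln N₁` has exactly one solution `R` with
`N - R ∈ (0, γ/β)`. -/
theorem sir_steady_state_unique
    (β γ N₁ N₂ N₃ N : ℝ) (hβ : 0 < β) (hγ : 0 < γ)
    (hN₁ : 0 < N₁) (hN₂ : 0 < N₂) (hN₃ : 0 ≤ N₃) (hN : N = N₁ + N₂ + N₃) :
    (∃! S : ℝ, S ∈ Set.Ioo 0 (γ / β) ∧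
        -S + (γ / β) * Real.log S + (N₁ + N₂ - (γ / β) * Real.log N₁) = 0) ∧
    (∃! R : ℝ, (N - R) ∈ Set.Ioo 0 (γ / β) ∧
        R = -(γ / β) * Real.log (N - R) + (N₃ + (γ / β) * Real.log N₁)) :=
  sir_steady_state_unique_general β γ N₁ N₂ N₃ N hβ hγ hN₁ hN₂ hN
end

section
/- (Core inequality of Proposition 1: the price peak leads the infection peak.) Fix reals β, γ > 0 and t > 0. Let I, S : [0,t] → ℝ be continuous with I(v)·S(v) > 0 for all v ∈ [0,t], and let P : [0,t] → ℝ be continuous with 0 < P(v) < P(t) for all v ∈ [0,t). If the price first-order condition β·I(t)·S(t)/P(t) = β·γ·∫₀ᵗ (I(v)·S(v)/P(v))·e^{−γ(t−v)} dv holds at time t, then β·I(t)·S(t) − β·γ·∫₀ᵗ I(v)·S(v)·e^{−γ(t−v)} dv > 0; that is, at any time where the equilibrium price peaks after a strictly rising price history, the mass of infected agents is still strictly increasing. -/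
/-!
Put `f v = I v S v e^{-γ(t-v)} > 0`. Since the price history stays strictly below `P t`, the
weight `1 / P v` exceeds `1 / P t` on `[0, t)`, so `∫₀ᵗ f < P t · ∫₀ᵗ f / P`.
Multiplying by `βγ` and substituting the first-order condition turns the right-hand side
into `β I t S t`.
-/

open Set

theorem integral_lt_mul_integral_div_of_lt_right {f p : ℝ → ℝ} {a b : ℝ} (hab : a < b)
    (hf : ContinuousOn f (Icc a b)) (hp : ContinuousOn p (Icc a b))
    (hf_pos : ∀ v ∈ Ico a b, 0 < f v) (hp_pos : ∀ v ∈ Ico a b, 0 < p v)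
    (hp_lt : ∀ v ∈ Ico a b, p v < p b) :
    ∫ v in a..b, f v < p b * ∫ v in a..b, f v / p v := by
  have ha : a ∈ Ico a b := ⟨le_rfl, hab⟩
  have hpb : 0 < p b := (hp_pos a ha).trans (hp_lt a ha)
  have hp_ne : ∀ v ∈ Icc a b, p v ≠ 0 := by
    intro v hv
    rcases hv.2.lt_or_eq with hvb | rfl
    · exact (hp_pos v ⟨hv.1, hvb⟩).ne'
    · exact hpb.ne'
  have hlt_at : ∀ v ∈ Ico a b, f v < p b * (f v / p v) := fun v hv => by
    rw [mul_div_assoc', lt_div_iff₀ (hp_pos v hv), mul_comm (p b)]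
    exact mul_lt_mul_of_pos_left (hp_lt v hv) (hf_pos v hv)
  rw [← intervalIntegral.integral_const_mul]
  refine intervalIntegral.integral_lt_integral_of_continuousOn_of_le_of_exists_lt hab hf
    (continuousOn_const.mul (hf.div hp hp_ne)) (fun v hv => ?_) ⟨a, ⟨le_rfl, hab.le⟩, hlt_at a ha⟩
  rcases hv.2.lt_or_eq with hvb | rfl
  · exact (hlt_at v ⟨hv.1.le, hvb⟩).le
  · rw [mul_div_cancel₀ _ hpb.ne']

/-- core inequality of Proposition 1: the price peak leads
the infection peak. If the price first-order condition
`β·I t·S t / P t = β·γ·∫₀ᵗ (I v·S v / P v)·e^{-γ(t-v)} dv` holds at a time `t`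
after a strictly rising positive price history, then
`β·I t·S t - β·γ·∫₀ᵗ I v·S v·e^{-γ(t-v)} dv > 0`. -/
theorem price_peak_leads_infection_peak
    (β γ t : ℝ) (hβ : 0 < β) (hγ : 0 < γ) (ht : 0 < t)
    (I S P : ℝ → ℝ)
    (hIc : ContinuousOn I (Set.Icc 0 t))
    (hSc : ContinuousOn S (Set.Icc 0 t))
    (hPc : ContinuousOn P (Set.Icc 0 t))
    (hIS : ∀ v ∈ Set.Icc 0 t, 0 < I v * S v)
    (hPpos : ∀ v ∈ Set.Ico 0 t, 0 < P v)
    (hPlt : ∀ v ∈ Set.Ico 0 t, P v < P t)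
    (hFOC : β * I t * S t / P t
        = β * γ * ∫ v in (0:ℝ)..t, (I v * S v / P v) * Real.exp (-(γ * (t - v)))) :
    0 < β * I t * S t
        - β * γ * ∫ v in (0:ℝ)..t, I v * S v * Real.exp (-(γ * (t - v))) := by
  set f : ℝ → ℝ := fun v => I v * S v * Real.exp (-(γ * (t - v)))
  have hPt : 0 < P t := (hPpos 0 ⟨le_rfl, ht⟩).trans (hPlt 0 ⟨le_rfl, ht⟩)
  have hf : ContinuousOn f (Icc 0 t) := (hIc.mul hSc).mul (by fun_prop)
  have hf_pos : ∀ v ∈ Ico 0 t, 0 < f v := fun v hv =>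
    mul_pos (hIS v (Ico_subset_Icc_self hv)) (Real.exp_pos _)
  have hFOC' : β * I t * S t = P t * (β * γ * ∫ v in (0:ℝ)..t, f v / P v) := by
    simp_rw [f, mul_div_right_comm _ (Real.exp _)]
    rw [← hFOC, mul_div_cancel₀ _ hPt.ne']
  have hlt := integral_lt_mul_integral_div_of_lt_right ht hf hPc hf_pos hPpos hPlt
  refine sub_pos.mpr ?_
  calc β * γ * ∫ v in (0:ℝ)..t, f v
      < β * γ * (P t * ∫ v in (0:ℝ)..t, f v / P v) := mul_lt_mul_of_pos_left hlt (mul_pos hβ hγ)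
    _ = β * I t * S t := by rw [hFOC']; ring
end

section
/- (Long-run price, Proposition 1.) Let β, γ > 0 and P₀ > 0. Let I, S : [0,∞) → ℝ be continuous and nonnegative with I(t) → 0 as t → ∞ and β·∫₀ᵗ I(v)·S(v)·e^{−γ(t−v)} dv ≤ I(t) for all t ≥ 0, and let P : [0,∞) → ℝ be continuous with P(v) ≥ P₀ for all v. Then X_I(t) = β·∫₀ᵗ (I(v)·S(v)/P(v))·e^{−γ(t−v)} dv → 0 as t → ∞; consequently, if ψ : ℝ → ℝ is continuous at 0 with ψ(0) = P₀, the equilibrium price ψ(X_I(t)) converges to P₀ as t → ∞. -/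
/-!
Since `P ≥ P₀`, the holdings are squeezed between `0` and `I t / P₀`: the renewal bound
controls the integral of the cohort purchases `I S e^{-γ(t-v)}`, and dividing by the price
only shrinks it. Hence `X_I t → 0` with `I`, and `ψ (X_I t) → ψ 0 = P₀` by continuity.
-/

open Filter Topology

theorem intervalIntegral_div_le_integral_div {f P : ℝ → ℝ} {a b P₀ : ℝ} (hab : a ≤ b)
    (hf : ContinuousOn f (Set.Icc a b)) (hf_nonneg : ∀ x ∈ Set.Icc a b, 0 ≤ f x)
    (hPc : ContinuousOn P (Set.Icc a b)) (hP₀ : 0 < P₀) (hP : ∀ x ∈ Set.Icc a b, P₀ ≤ P x) :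
    ∫ x in a..b, f x / P x ≤ (∫ x in a..b, f x) / P₀ := by
  have hP_pos : ∀ x ∈ Set.Icc a b, 0 < P x := fun x hx => hP₀.trans_le (hP x hx)
  rw [← intervalIntegral.integral_div]
  refine intervalIntegral.integral_mono_on hab ?_ ?_
    fun x hx => div_le_div_of_nonneg_left (hf_nonneg x hx) hP₀ (hP x hx)
  · rw [← Set.uIcc_of_le hab] at hf hPc hP_pos
    exact (hf.div hPc fun x hx => (hP_pos x hx).ne').intervalIntegrable
  · rw [← Set.uIcc_of_le hab] at hf
    exact (hf.div_const P₀).intervalIntegrable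

theorem long_run_price_general
    (β γ P₀ : ℝ) (hβ : 0 < β) (hP₀ : 0 < P₀)
    (I S P : ℝ → ℝ)
    (hIc : ContinuousOn I (Set.Ici 0))
    (hSc : ContinuousOn S (Set.Ici 0))
    (hInonneg : ∀ t, 0 ≤ t → 0 ≤ I t)
    (hSnonneg : ∀ t, 0 ≤ t → 0 ≤ S t)
    (hIlim : Tendsto I atTop (𝓝 0))
    (hbound : ∀ t, 0 ≤ t →
      β * (∫ v in (0:ℝ)..t, I v * S v * Real.exp (-(γ * (t - v)))) ≤ I t)
    (hPc : ContinuousOn P (Set.Ici 0))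
    (hP : ∀ v, 0 ≤ v → P₀ ≤ P v)
    (X_I : ℝ → ℝ)
    (hX : ∀ t, X_I t = β * ∫ v in (0:ℝ)..t,
        (I v * S v / P v) * Real.exp (-(γ * (t - v)))) :
    Tendsto X_I atTop (𝓝 0) ∧
    ∀ ψ : ℝ → ℝ, ContinuousAt ψ 0 → ψ 0 = P₀ →
      Tendsto (fun t => ψ (X_I t)) atTop (𝓝 P₀) := by
  have hIS : ∀ v, 0 ≤ v → 0 ≤ I v * S v :=
    fun v hv => mul_nonneg (hInonneg v hv) (hSnonneg v hv)
  have hX_nonneg : ∀ t, 0 ≤ t → 0 ≤ X_I t := fun t ht => by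
    rw [hX t]
    refine mul_nonneg hβ.le (intervalIntegral.integral_nonneg ht fun v hv => ?_)
    exact mul_nonneg (div_nonneg (hIS v hv.1) (hP₀.le.trans (hP v hv.1))) (Real.exp_nonneg _)
  have hX_le : ∀ t, 0 ≤ t → X_I t ≤ I t / P₀ := fun t ht => by
    have hIcc : Set.Icc 0 t ⊆ Set.Ici 0 := Set.Icc_subset_Ici_self
    have hpurchases : ContinuousOn (fun v => I v * S v * Real.exp (-(γ * (t - v))))
        (Set.Icc 0 t) :=
      ((hIc.mono hIcc).mul (hSc.mono hIcc)).mul (by fun_prop)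
    calc X_I t = β * ∫ v in (0:ℝ)..t, I v * S v * Real.exp (-(γ * (t - v))) / P v := by
          simp only [hX t, div_mul_eq_mul_div]
      _ ≤ β * ((∫ v in (0:ℝ)..t, I v * S v * Real.exp (-(γ * (t - v)))) / P₀) := by
          gcongr
          exact intervalIntegral_div_le_integral_div ht hpurchases
            (fun v hv => mul_nonneg (hIS v hv.1) (Real.exp_nonneg _))
            (hPc.mono hIcc) hP₀ fun v hv => hP v hv.1
      _ ≤ I t / P₀ := by
          rw [← mul_div_assoc]
          exact div_le_div_of_nonneg_right (hbound t ht) hP₀.le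
  have hX_lim : Tendsto X_I atTop (𝓝 0) :=
    squeeze_zero' (eventually_atTop.2 ⟨0, hX_nonneg⟩) (eventually_atTop.2 ⟨0, hX_le⟩)
      (by simpa using hIlim.div_const P₀)
  exact ⟨hX_lim, fun ψ hψ hψ0 => hψ0 ▸ hψ.tendsto.comp hX_lim⟩

/-- long-run price, Proposition 1. With `I → 0` and the
renewal bound, the infected cohorts' holdings `X_I t → 0` as `t → ∞`, and
hence the equilibrium price `ψ (X_I t) → P₀`. -/
theorem long_run_price
    (β γ P₀ : ℝ) (hβ : 0 < β) (hγ : 0 < γ) (hP₀ : 0 < P₀)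
    (I S P : ℝ → ℝ)
    (hIc : ContinuousOn I (Set.Ici 0))
    (hSc : ContinuousOn S (Set.Ici 0))
    (hInonneg : ∀ t, 0 ≤ t → 0 ≤ I t)
    (hSnonneg : ∀ t, 0 ≤ t → 0 ≤ S t)
    (hIlim : Tendsto I atTop (𝓝 0))
    (hbound : ∀ t, 0 ≤ t →
      β * (∫ v in (0:ℝ)..t, I v * S v * Real.exp (-(γ * (t - v)))) ≤ I t)
    (hPc : ContinuousOn P (Set.Ici 0))
    (hP : ∀ v, 0 ≤ v → P₀ ≤ P v)
    (X_I : ℝ → ℝ)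
    (hX : ∀ t, X_I t = β * ∫ v in (0:ℝ)..t,
        (I v * S v / P v) * Real.exp (-(γ * (t - v)))) :
    Tendsto X_I atTop (𝓝 0) ∧
    ∀ ψ : ℝ → ℝ, ContinuousAt ψ 0 → ψ 0 = P₀ →
      Tendsto (fun t => ψ (X_I t)) atTop (𝓝 P₀) :=
  long_run_price_general β γ P₀ hβ hP₀ I S P hIc hSc hInonneg hSnonneg hIlim hbound hPc hP X_I hX
end

section
/- (Convexity of S past the infection peak, used in the proof of Proposition 1.) If N₁ > 0 and N₂ > 0, then at every time t ≥ 0 with S(t) < γ/β one has S''(t) > 0. -/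
/-! Both `S` and `I` solve linear equations `f' = c·f` with continuous coefficients
(`c = -β·I` and `c = β·S - γ`), so the integrating factor `exp (-∫ c)` shows they stay
positive. Differentiating `S' = -β·I·S` once more gives
`S'' = β·I·S·(γ - β·S + β·I)`, and every factor is positive once `β·S < γ`. -/

open Set

section LinearODE

variable {f c : ℝ → ℝ} {a : ℝ}

theorem exists_hasDerivAt_of_continuousOn_Ici (hc : ContinuousOn c (Ici a)) :
    ∃ C : ℝ → ℝ, ∀ t ≥ a, HasDerivAt C (c t) t := by
  have hext : Continuous fun t => c (max t a) :=
    hc.comp_continuous (continuous_id.max continuous_const) fun t => le_max_right t a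
  refine ⟨fun t => ∫ s in a..t, c (max s a), fun t ht => ?_⟩
  simpa only [max_eq_left ht] using (hext.integral_hasStrictDerivAt a t).hasDerivAt

theorem pos_of_hasDerivAt_mul_self (hc : ContinuousOn c (Ici a))
    (hf : ∀ t ≥ a, HasDerivAt f (c t * f t) t) (ha : 0 < f a) : ∀ t ≥ a, 0 < f t := by
  obtain ⟨C, hC⟩ := exists_hasDerivAt_of_continuousOn_Ici hc
  have hderiv : ∀ t ≥ a, HasDerivAt (fun s => f s * Real.exp (-C s)) 0 t := fun t ht =>
    ((hf t ht).mul (hC t ht).neg.exp).congr_deriv (by ring)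
  intro t ht
  have hconst : f t * Real.exp (-C t) = f a * Real.exp (-C a) :=
    constant_of_has_deriv_right_zero
      (fun s hs => (hderiv s hs.1).continuousAt.continuousWithinAt)
      (fun s hs => (hderiv s hs.1).hasDerivWithinAt) t ⟨ht, le_rfl⟩
  have hprod : 0 < f t * Real.exp (-C t) := by
    rw [hconst]
    positivity
  exact pos_of_mul_pos_left hprod (Real.exp_pos _).le

end LinearODE

theorem sir_susceptible_convex_past_peak_general
    (β γ : ℝ) (hβ : 0 < β)
    (S I : ℝ → ℝ) (N₁ N₂ : ℝ)
    (hS : ∀ t, 0 ≤ t → HasDerivAt S (-β * I t * S t) t)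
    (hI : ∀ t, 0 ≤ t → HasDerivAt I (β * I t * S t - γ * I t) t)
    (hS0 : S 0 = N₁) (hI0 : I 0 = N₂)
    (hN₁ : 0 < N₁) (hN₂ : 0 < N₂) :
    ∀ t, 0 ≤ t → S t < γ / β →
      ∃ d : ℝ, 0 < d ∧
        HasDerivWithinAt (fun s => -β * I s * S s) d (Set.Ici 0) t := by
  have hScont : ContinuousOn S (Ici 0) := fun t ht => (hS t ht).continuousAt.continuousWithinAt
  have hIcont : ContinuousOn I (Ici 0) := fun t ht => (hI t ht).continuousAt.continuousWithinAt
  have hSpos : ∀ t ≥ 0, 0 < S t :=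
    pos_of_hasDerivAt_mul_self (c := fun t => -β * I t) (continuousOn_const.mul hIcont) hS
      (hS0 ▸ hN₁)
  have hIpos : ∀ t ≥ 0, 0 < I t :=
    pos_of_hasDerivAt_mul_self (c := fun t => β * S t - γ)
      ((continuousOn_const.mul hScont).sub continuousOn_const)
      (fun t ht => by convert hI t ht using 1; ring) (hI0 ▸ hN₂)
  intro t ht hpeak
  have hβS : β * S t < γ := by rwa [lt_div_iff₀ hβ, mul_comm] at hpeak
  have hSt := hSpos t ht
  have hIt := hIpos t ht
  have hfactor : 0 < γ - β * S t + β * I t := by linarith [mul_pos hβ hIt]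
  have hS'' : HasDerivAt (fun s => -β * I s * S s)
      (β * I t * S t * (γ - β * S t + β * I t)) t :=
    (((hI t ht).const_mul (-β)).mul (hS t ht)).congr_deriv (by ring)
  exact ⟨_, by positivity, hS''.hasDerivWithinAt⟩

/-- convexity of `S` past the infection peak. If `N₁ > 0`
and `N₂ > 0`, then at every `t ≥ 0` with `S t < γ/β` one has `S'' t > 0`;
since `S' = -β·I·S` on `[0,∞)`, this says the derivative function
`t ↦ -β·I t·S t` has a strictly positive derivative within `[0,∞)` there. -/
theorem sir_susceptible_convex_past_peak
    (β γ : ℝ) (hβ : 0 < β) (hγ : 0 < γ)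
    (S I R : ℝ → ℝ) (N₁ N₂ N₃ N : ℝ)
    (hS : ∀ t, 0 ≤ t → HasDerivAt S (-β * I t * S t) t)
    (hI : ∀ t, 0 ≤ t → HasDerivAt I (β * I t * S t - γ * I t) t)
    (hR : ∀ t, 0 ≤ t → HasDerivAt R (γ * I t) t)
    (hS0 : S 0 = N₁) (hI0 : I 0 = N₂) (hR0 : R 0 = N₃)
    (hN : N = N₁ + N₂ + N₃)
    (hN₁ : 0 < N₁) (hN₂ : 0 < N₂) :
    ∀ t, 0 ≤ t → S t < γ / β →
      ∃ d : ℝ, 0 < d ∧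
        HasDerivWithinAt (fun s => -β * I s * S s) d (Set.Ici 0) t :=
  sir_susceptible_convex_past_peak_general β γ hβ S I N₁ N₂ hS hI hS0 hI0 hN₁ hN₂
end

section
/- (Remark 1: rational expectations accelerate the boom.) Let γ > 0, let t₁ > 0, let f : [0,t₁] → ℝ be continuous with f(v) > 0 for all v, and let φ : (0,∞) → ℝ be continuous and strictly increasing. Suppose P_M, P_RE : [0,t₁] → (0,∞) are continuous and satisfy, for all t ∈ [0,t₁], the equilibrium conditions φ(P_M(t)) = ∫₀ᵗ (f(v)/P_M(v))·e^{−γ(t−v)} dv and φ(P_RE(t)) = ∫₀ᵗ (f(v)/P_RE(v)) dv. Then P_M(t) < P_RE(t) for all t ∈ (0, t₁]. -/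
/-!
Write `U t = φ (P_M t)` and `W t = φ (P_RE t)`. Then `U' = f / P_M - γ U` and `W' = f / P_RE`,
with `U 0 = W 0 = 0`. At any `t > 0` with `W t ≤ U t`, monotonicity of `φ` gives
`P_RE t ≤ P_M t`, hence `f / P_M ≤ f / P_RE` there, so `(W - U)' ≥ γ U > 0`. A function that
starts at `0` and has positive derivative wherever it is `≤ 0` stays positive afterwards.
-/

open Set Real

lemma ContinuousOn.exists_continuous_eqOn_Icc {α β : Type*} [LinearOrder α] [TopologicalSpace α]
    [OrderTopology α] [TopologicalSpace β] {f : α → β} {a b : α} (hab : a ≤ b)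
    (hf : ContinuousOn f (Icc a b)) :
    ∃ g : α → β, Continuous g ∧ range g ⊆ f '' Icc a b ∧ EqOn g f (Icc a b) :=
  ⟨fun x => f (projIcc a b hab x),
    hf.comp_continuous (continuous_subtype_val.comp continuous_projIcc) fun x => (projIcc a b hab x).2,
    range_subset_iff.2 fun x => mem_image_of_mem f (projIcc a b hab x).2,
    fun x hx => by simp only [projIcc_of_mem hab hx]⟩

lemma ContinuousOn.exists_continuous_pos_eqOn_div {f P : ℝ → ℝ} {a b : ℝ} (hab : a ≤ b)
    (hfc : ContinuousOn f (Icc a b)) (hPc : ContinuousOn P (Icc a b))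
    (hf : ∀ v ∈ Icc a b, 0 < f v) (hP : ∀ v ∈ Icc a b, 0 < P v) :
    ∃ g : ℝ → ℝ, Continuous g ∧ (∀ v, 0 < g v) ∧ ∀ v ∈ Icc a b, g v = f v / P v := by
  obtain ⟨g, hgc, hgrange, hg⟩ :=
    (hfc.div hPc fun v hv => (hP v hv).ne').exists_continuous_eqOn_Icc hab
  refine ⟨g, hgc, fun v => ?_, hg⟩
  obtain ⟨w, hw, hwv⟩ := hgrange (mem_range_self v)
  exact hwv ▸ div_pos (hf w hw) (hP w hw)

lemma IsMinOn.hasDerivAt_nonpos_of_right_end {f : ℝ → ℝ} {f' a b : ℝ}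
    (hmin : IsMinOn f (Icc a b) b) (hab : a < b) (hf : HasDerivAt f f' b) : f' ≤ 0 := by
  have hcone : a - b ∈ posTangentConeAt (Icc a b) b :=
    sub_mem_posTangentConeAt_of_segment_subset
      ((convex_Icc a b).segment_subset (right_mem_Icc.2 hab.le) (left_mem_Icc.2 hab.le))
  have : 0 ≤ (a - b) * f' := by
    simpa using hmin.localize.hasFDerivWithinAt_nonneg hf.hasFDerivAt.hasFDerivWithinAt hcone
  nlinarith

lemma pos_of_deriv_pos_where_nonpos {d d' : ℝ → ℝ} {a b : ℝ}
    (hd : ∀ t ∈ Icc a b, HasDerivAt d (d' t) t) (ha : d a = 0)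
    (hpos : ∀ t ∈ Ioc a b, d t ≤ 0 → 0 < d' t) : ∀ t ∈ Ioc a b, 0 < d t := by
  intro s hs
  by_contra! hds
  have hsub : Icc a s ⊆ Icc a b := Icc_subset_Icc_right hs.2
  obtain ⟨m₀, hm₀, hmin₀⟩ := isCompact_Icc.exists_isMinOn (nonempty_Icc.2 hs.1.le)
    fun t ht => (hd t (hsub ht)).continuousAt.continuousWithinAt
  obtain ⟨m, hm, hmin⟩ : ∃ m ∈ Ioc a s, IsMinOn d (Icc a s) m := by
    rcases hm₀.1.lt_or_eq with ham | ham
    · exact ⟨m₀, ⟨ham, hm₀.2⟩, hmin₀⟩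
    · refine ⟨s, right_mem_Ioc.2 hs.1, fun t ht => ?_⟩
      have : d a ≤ d t := ham ▸ hmin₀ ht
      exact hds.trans (ha ▸ this)
  have hdm : d m ≤ 0 := (hmin (right_mem_Icc.2 hs.1.le)).trans hds
  have hmin' : IsMinOn d (Icc a m) m := hmin.on_subset (Icc_subset_Icc_right hm.2)
  exact (hpos m ⟨hm.1, hm.2.trans hs.2⟩ hdm).not_ge
    (hmin'.hasDerivAt_nonpos_of_right_end hm.1 (hd m (hsub (Ioc_subset_Icc_self hm))))

lemma hasDerivAt_integral_mul_exp_neg {g : ℝ → ℝ} (hg : Continuous g) (a γ t : ℝ) :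
    HasDerivAt (fun t => ∫ v in a..t, g v * exp (-(γ * (t - v))))
      (g t - γ * ∫ v in a..t, g v * exp (-(γ * (t - v)))) t := by
  have hfactor : ∀ t, ∫ v in a..t, g v * exp (-(γ * (t - v))) =
      exp (-(γ * t)) * ∫ v in a..t, g v * exp (γ * v) := by
    intro t
    rw [← intervalIntegral.integral_const_mul]
    congr 1 with v
    rw [mul_left_comm, ← exp_add]
    ring_nf
  have hcont : Continuous fun v => g v * exp (γ * v) := by fun_prop
  have hint := hcont.integral_hasStrictDerivAt a t
  have hexp : HasDerivAt (fun t => exp (-(γ * t))) (exp (-(γ * t)) * -γ) t :=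
    ((hasDerivAt_id t).const_mul γ).neg.exp.congr_deriv (by simp)
  simp only [hfactor]
  refine (hexp.mul hint.hasDerivAt).congr_deriv ?_
  rw [mul_left_comm, ← exp_add, neg_add_cancel, exp_zero]
  ring

lemma integral_mul_exp_neg_lt_integral {γ b : ℝ} (hγ : 0 < γ) {g₁ g₂ : ℝ → ℝ}
    (hg₁c : Continuous g₁) (hg₂c : Continuous g₂) (hg₁ : ∀ v, 0 < g₁ v)
    (hle : ∀ t ∈ Ioc 0 b, ∫ v in (0:ℝ)..t, g₂ v ≤ ∫ v in (0:ℝ)..t, g₁ v * exp (-(γ * (t - v))) →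
      g₁ t ≤ g₂ t) :
    ∀ t ∈ Ioc 0 b, ∫ v in (0:ℝ)..t, g₁ v * exp (-(γ * (t - v))) < ∫ v in (0:ℝ)..t, g₂ v := by
  set U := fun t => ∫ v in (0:ℝ)..t, g₁ v * exp (-(γ * (t - v)))
  have hUpos : ∀ t, 0 < t → 0 < U t := fun t ht =>
    intervalIntegral.intervalIntegral_pos_of_pos_on
      ((hg₁c.mul (by fun_prop)).intervalIntegrable 0 t)
      (fun v _ => mul_pos (hg₁ v) (exp_pos _)) ht
  have hgap := pos_of_deriv_pos_where_nonpos (a := 0) (b := b)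
    (d := fun t => (∫ v in (0:ℝ)..t, g₂ v) - U t)
    (d' := fun t => g₂ t - (g₁ t - γ * U t))
    (fun t _ => (hg₂c.integral_hasStrictDerivAt 0 t).hasDerivAt.sub
      (hasDerivAt_integral_mul_exp_neg hg₁c 0 γ t)) (by simp [U])
    fun t ht hd => by nlinarith [hle t ht (sub_nonpos.1 hd), hUpos t ht.1]
  exact fun t ht => sub_pos.1 (hgap t ht)

theorem re_accelerates_boom_general
    (γ t₁ : ℝ) (hγ : 0 < γ) (ht₁ : 0 < t₁)
    (f : ℝ → ℝ) (hfc : ContinuousOn f (Set.Icc 0 t₁))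
    (hf : ∀ v ∈ Set.Icc 0 t₁, 0 < f v)
    (φ : ℝ → ℝ)
    (hφ : StrictMonoOn φ (Set.Ioi 0))
    (P_M P_RE : ℝ → ℝ)
    (hMc : ContinuousOn P_M (Set.Icc 0 t₁))
    (hREc : ContinuousOn P_RE (Set.Icc 0 t₁))
    (hMpos : ∀ t ∈ Set.Icc 0 t₁, 0 < P_M t)
    (hREpos : ∀ t ∈ Set.Icc 0 t₁, 0 < P_RE t)
    (heqM : ∀ t ∈ Set.Icc 0 t₁,
      φ (P_M t) = ∫ v in (0:ℝ)..t, (f v / P_M v) * Real.exp (-(γ * (t - v))))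
    (heqRE : ∀ t ∈ Set.Icc 0 t₁,
      φ (P_RE t) = ∫ v in (0:ℝ)..t, f v / P_RE v) :
    ∀ t ∈ Set.Ioc 0 t₁, P_M t < P_RE t := by
  -- Continuous extensions to `ℝ` make the integrals differentiable in `t` up to and at `t₁`.
  obtain ⟨gM, hgMc, hgMpos, hgM⟩ := hfc.exists_continuous_pos_eqOn_div ht₁.le hMc hf hMpos
  obtain ⟨gRE, hgREc, -, hgRE⟩ := hfc.exists_continuous_pos_eqOn_div ht₁.le hREc hf hREpos
  have hU : ∀ t ∈ Icc 0 t₁,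
      φ (P_M t) = ∫ v in (0:ℝ)..t, gM v * exp (-(γ * (t - v))) := fun t ht =>
    (heqM t ht).trans <| intervalIntegral.integral_congr fun v hv => by
      rw [uIcc_of_le ht.1] at hv
      rw [hgM v ⟨hv.1, hv.2.trans ht.2⟩]
  have hW : ∀ t ∈ Icc 0 t₁, φ (P_RE t) = ∫ v in (0:ℝ)..t, gRE v := fun t ht =>
    (heqRE t ht).trans <| intervalIntegral.integral_congr fun v hv => by
      rw [uIcc_of_le ht.1] at hv
      rw [hgRE v ⟨hv.1, hv.2.trans ht.2⟩]
  have hφ_lt_iff {t : ℝ} (ht : t ∈ Icc 0 t₁) : φ (P_M t) < φ (P_RE t) ↔ P_M t < P_RE t :=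
    hφ.lt_iff_lt (hMpos t ht) (hREpos t ht)
  have hcmp := integral_mul_exp_neg_lt_integral hγ hgMc hgREc hgMpos fun t ht hle => by
    have ht' : t ∈ Icc 0 t₁ := Ioc_subset_Icc_self ht
    have hPle : P_RE t ≤ P_M t := by
      rw [← not_lt, ← hφ_lt_iff ht', hU t ht', hW t ht', not_lt]
      exact hle
    rw [hgM t ht', hgRE t ht']
    exact div_le_div_of_nonneg_left (hf t ht').le (hREpos t ht') hPle
  intro t ht
  have ht' : t ∈ Icc 0 t₁ := Ioc_subset_Icc_self ht
  rw [← hφ_lt_iff ht', hU t ht', hW t ht']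
  exact hcmp t ht

/-- Remark 1: rational expectations accelerate the boom.
If `φ(P_M t) = ∫₀ᵗ (f v / P_M v)·e^{-γ(t-v)} dv` (cured agents sell at rate
`γ`) and `φ(P_RE t) = ∫₀ᵗ f v / P_RE v dv` (no selling before the peak), then
`P_M t < P_RE t` for all `t ∈ (0, t₁]`. -/
theorem re_accelerates_boom
    (γ t₁ : ℝ) (hγ : 0 < γ) (ht₁ : 0 < t₁)
    (f : ℝ → ℝ) (hfc : ContinuousOn f (Set.Icc 0 t₁))
    (hf : ∀ v ∈ Set.Icc 0 t₁, 0 < f v)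
    (φ : ℝ → ℝ) (hφc : ContinuousOn φ (Set.Ioi 0))
    (hφ : StrictMonoOn φ (Set.Ioi 0))
    (P_M P_RE : ℝ → ℝ)
    (hMc : ContinuousOn P_M (Set.Icc 0 t₁))
    (hREc : ContinuousOn P_RE (Set.Icc 0 t₁))
    (hMpos : ∀ t ∈ Set.Icc 0 t₁, 0 < P_M t)
    (hREpos : ∀ t ∈ Set.Icc 0 t₁, 0 < P_RE t)
    (heqM : ∀ t ∈ Set.Icc 0 t₁,
      φ (P_M t) = ∫ v in (0:ℝ)..t, (f v / P_M v) * Real.exp (-(γ * (t - v))))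
    (heqRE : ∀ t ∈ Set.Icc 0 t₁,
      φ (P_RE t) = ∫ v in (0:ℝ)..t, f v / P_RE v) :
    ∀ t ∈ Set.Ioc 0 t₁, P_M t < P_RE t :=
  re_accelerates_boom_general γ t₁ hγ ht₁ f hfc hf φ hφ P_M P_RE hMc hREc hMpos hREpos heqM heqRE
end

section
/- (Remark 3: the peak price is lower under rational expectations.) Let γ > 0, let t₂ > 0, let f : [0,t₂] → ℝ be continuous with f(v) > 0 for all v, and let φ : (0,∞) → ℝ be strictly increasing. Suppose P_M, P_RE : [0,t₂] → (0,∞) are continuous and satisfy φ(P_M(t₂)) = ∫₀^{t₂} (f(v)/P_M(v))·e^{−γ(t₂−v)} dv and φ(P_RE(t₂)) = ∫₀^{t₂} (f(v)/P_RE(v))·e^{−γ(t₂−v)} dv. Then it is NOT the case that P_M(v) < P_RE(v) for all v ∈ [0, t₂); i.e., there exists v ∈ [0, t₂) with P_M(v) ≥ P_RE(v). Hence the immediate-selling price path P_M must reach the rational-expectations price level before time t₂. -/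
/-!
Suppose `P_M < P_RE` on `[0, t₂)`. By continuity `P_M t₂ ≤ P_RE t₂`, so `P_M ≤ P_RE` on all of
`[0, t₂]` with strict inequality at `0`. Each cohort then buys strictly more shares along `P_M`, so
the shareholding at `t₂` is strictly larger under `P_M`; since `φ` is strictly increasing this
forces `P_RE t₂ < P_M t₂`, a contradiction.
-/

open Set

theorem le_on_Icc_of_lt_on_Ico {f g : ℝ → ℝ} {a b : ℝ} (hab : a < b)
    (hf : ContinuousOn f (Icc a b)) (hg : ContinuousOn g (Icc a b))
    (hlt : ∀ x ∈ Ico a b, f x < g x) : ∀ x ∈ Icc a b, f x ≤ g x := by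
  intro x hx
  rcases hx.2.lt_or_eq with hxb | rfl
  · exact (hlt x ⟨hx.1, hxb⟩).le
  have hx_closure : x ∈ closure (Ico a x) := by rw [closure_Ico hab.ne]; exact hx
  exact ContinuousWithinAt.closure_le hx_closure
    ((hf x hx).mono Ico_subset_Icc_self) ((hg x hx).mono Ico_subset_Icc_self)
    fun y hy => (hlt y hy).le

theorem integral_div_lt_integral_div {g P Q : ℝ → ℝ} {a b : ℝ} (hab : a < b)
    (hg : ContinuousOn g (Icc a b)) (hg_pos : ∀ x ∈ Icc a b, 0 < g x)
    (hP : ContinuousOn P (Icc a b)) (hQ : ContinuousOn Q (Icc a b))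
    (hP_pos : ∀ x ∈ Icc a b, 0 < P x) (hPQ : ∀ x ∈ Icc a b, P x ≤ Q x)
    {c : ℝ} (hc : c ∈ Icc a b) (hPQc : P c < Q c) :
    ∫ x in a..b, g x / Q x < ∫ x in a..b, g x / P x := by
  have hQ_pos : ∀ x ∈ Icc a b, 0 < Q x := fun x hx => (hP_pos x hx).trans_le (hPQ x hx)
  refine intervalIntegral.integral_lt_integral_of_continuousOn_of_le_of_exists_lt hab
    (hg.div hQ fun x hx => (hQ_pos x hx).ne') (hg.div hP fun x hx => (hP_pos x hx).ne')
    (fun x hx => ?_) ⟨c, hc, div_lt_div_of_pos_left (hg_pos c hc) (hP_pos c hc) hPQc⟩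
  have hx' : x ∈ Icc a b := Ioc_subset_Icc_self hx
  exact div_le_div_of_nonneg_left (hg_pos x hx').le (hP_pos x hx') (hPQ x hx')

theorem re_peak_price_lower_general
    (γ t₂ : ℝ) (ht₂ : 0 < t₂)
    (f : ℝ → ℝ) (hfc : ContinuousOn f (Set.Icc 0 t₂))
    (hf : ∀ v ∈ Set.Icc 0 t₂, 0 < f v)
    (φ : ℝ → ℝ) (hφ : StrictMonoOn φ (Set.Ioi 0))
    (P_M P_RE : ℝ → ℝ)
    (hMc : ContinuousOn P_M (Set.Icc 0 t₂))
    (hREc : ContinuousOn P_RE (Set.Icc 0 t₂))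
    (hMpos : ∀ t ∈ Set.Icc 0 t₂, 0 < P_M t)
    (hREpos : ∀ t ∈ Set.Icc 0 t₂, 0 < P_RE t)
    (heqM : φ (P_M t₂)
      = ∫ v in (0:ℝ)..t₂, (f v / P_M v) * Real.exp (-(γ * (t₂ - v))))
    (heqRE : φ (P_RE t₂)
      = ∫ v in (0:ℝ)..t₂, (f v / P_RE v) * Real.exp (-(γ * (t₂ - v)))) :
    ¬ (∀ v ∈ Set.Ico 0 t₂, P_M v < P_RE v) := by
  intro hlt
  have ht₂_mem : t₂ ∈ Icc 0 t₂ := right_mem_Icc.2 ht₂.le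
  have hle := le_on_Icc_of_lt_on_Ico ht₂ hMc hREc hlt
  have hinflow_pos : ∀ v ∈ Icc 0 t₂, 0 < f v * Real.exp (-(γ * (t₂ - v))) :=
    fun v hv => mul_pos (hf v hv) (Real.exp_pos _)
  have hshares : φ (P_RE t₂) < φ (P_M t₂) := by
    simp only [div_mul_eq_mul_div] at heqM heqRE
    rw [heqM, heqRE]
    exact integral_div_lt_integral_div ht₂ (hfc.mul (by fun_prop)) hinflow_pos hMc hREc hMpos hle
      (left_mem_Icc.2 ht₂.le) (hlt 0 ⟨le_rfl, ht₂⟩)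
  exact (hle t₂ ht₂_mem).not_gt
    ((hφ.lt_iff_lt (hREpos t₂ ht₂_mem) (hMpos t₂ ht₂_mem)).1 hshares)

/-- Remark 3: the peak price is lower under rational
expectations. It cannot be that `P_M < P_RE` on all of `[0, t₂)`: there is
`v ∈ [0, t₂)` with `P_RE v ≤ P_M v`. -/
theorem re_peak_price_lower
    (γ t₂ : ℝ) (hγ : 0 < γ) (ht₂ : 0 < t₂)
    (f : ℝ → ℝ) (hfc : ContinuousOn f (Set.Icc 0 t₂))
    (hf : ∀ v ∈ Set.Icc 0 t₂, 0 < f v)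
    (φ : ℝ → ℝ) (hφ : StrictMonoOn φ (Set.Ioi 0))
    (P_M P_RE : ℝ → ℝ)
    (hMc : ContinuousOn P_M (Set.Icc 0 t₂))
    (hREc : ContinuousOn P_RE (Set.Icc 0 t₂))
    (hMpos : ∀ t ∈ Set.Icc 0 t₂, 0 < P_M t)
    (hREpos : ∀ t ∈ Set.Icc 0 t₂, 0 < P_RE t)
    (heqM : φ (P_M t₂)
      = ∫ v in (0:ℝ)..t₂, (f v / P_M v) * Real.exp (-(γ * (t₂ - v))))
    (heqRE : φ (P_RE t₂)
      = ∫ v in (0:ℝ)..t₂, (f v / P_RE v) * Real.exp (-(γ * (t₂ - v)))) :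
    ¬ (∀ v ∈ Set.Ico 0 t₂, P_M v < P_RE v) :=
  re_peak_price_lower_general γ t₂ ht₂ f hfc hf φ hφ P_M P_RE hMc hREc hMpos hREpos heqM heqRE
end

section
/- (Existence of the price peak, part of Proposition 1.) Let γ > 0 and P₀ > 0. Let I, S : [0,∞) → ℝ be continuous with I(v)·S(v) > 0 for all v ≥ 0 and I(t) → 0 as t → ∞, suppose β·∫₀ᵗ I(v)·S(v)·e^{−γ(t−v)} dv ≤ I(t) for all t ≥ 0, and let P : [0,∞) → ℝ be continuous with P(v) ≥ P₀ for all v. Then the holdings function X_I(t) = β·∫₀ᵗ (I(v)·S(v)/P(v))·e^{−γ(t−v)} dv satisfies X_I(0) = 0, X_I(t) > 0 for all t > 0, X_I(t) → 0 as t → ∞, and X_I attains a global maximum over [0,∞) at some time t*_P > 0 with X_I(t*_P) > 0; consequently, for any strictly increasing continuous ψ : ℝ → ℝ with ψ(0) = P₀ (the inverse excess-supply function), the price path ψ(X_I(t)) starts at P₀, attains a global maximum strictly above P₀ at t*_P, and returns to P₀ in the long run. -/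
open Filter Topology Set

/-!
Writing `e^{-γ(t-v)} = e^{-γt} e^{γv}`, the holdings are `e^{-γt}` times a primitive of a function
continuous on `[0, ∞)`, hence continuous there, and positive for `t > 0`. Since `P ≥ P₀`, the holdings
are at most `1/P₀` times the infected-side integral, hence at most `I t / P₀ → 0`. A continuous
function on `[0, ∞)` that is positive at `t = 1` and tends to `0` attains its maximum (the extreme
value theorem on `[0, T]` with `T` large), at a point where it is positive, hence at some `t > 0`.
-/

theorem ContinuousOn.continuousOn_primitive_Ici {f : ℝ → ℝ} {a : ℝ} (hf : ContinuousOn f (Ici a)) :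
    ContinuousOn (fun t => ∫ v in a..t, f v) (Ici a) := by
  intro x hx
  have hax : a ≤ x + 1 := by linarith [mem_Ici.1 hx]
  have hnhds : Icc a (x + 1) ∈ 𝓝[Ici a] x :=
    mem_nhdsWithin.2 ⟨Iio (x + 1), isOpen_Iio, by simp, fun y hy => ⟨hy.2, le_of_lt hy.1⟩⟩
  have hint : IntervalIntegrable f MeasureTheory.volume (min a a) (max a (x + 1)) := by
    rw [min_self, max_eq_right hax]
    exact (hf.mono Icc_subset_Ici_self).intervalIntegrable_of_Icc hax
  exact (intervalIntegral.continuousWithinAt_primitive (MeasureTheory.measure_singleton x)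
    hint).mono_of_mem_nhdsWithin hnhds

theorem ContinuousOn.exists_isMaxOn_Ici_of_tendsto {f : ℝ → ℝ} {a x₀ L : ℝ}
    (hf : ContinuousOn f (Ici a)) (hlim : Tendsto f atTop (𝓝 L)) (hx₀ : a ≤ x₀)
    (hL : L < f x₀) : ∃ x ∈ Ici a, IsMaxOn f (Ici a) x := by
  refine hf.exists_isMaxOn' isClosed_Ici hx₀ ?_
  rw [cocompact_eq_atBot_atTop, inf_sup_right, eventually_sup]
  constructor
  · filter_upwards [mem_inf_of_left (eventually_lt_atBot a),
      mem_inf_of_right (mem_principal_self (Ici a))] with x hxa hx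
    exact absurd hx (not_le.2 hxa)
  · exact mem_inf_of_left ((hlim.eventually_lt_const hL).mono fun _ => le_of_lt)

noncomputable def expDecayIntegral (γ : ℝ) (h : ℝ → ℝ) (t : ℝ) : ℝ :=
  ∫ v in (0 : ℝ)..t, h v * Real.exp (-(γ * (t - v)))

namespace expDecayIntegral

variable {γ t : ℝ} {h k : ℝ → ℝ}

theorem eq_exp_mul_integral (γ : ℝ) (h : ℝ → ℝ) (t : ℝ) :
    expDecayIntegral γ h t = Real.exp (-(γ * t)) * ∫ v in (0 : ℝ)..t, h v * Real.exp (γ * v) := by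
  rw [expDecayIntegral, ← intervalIntegral.integral_const_mul]
  congr 1 with v
  rw [mul_left_comm, ← Real.exp_add]
  ring_nf

@[simp]
theorem zero_right (γ : ℝ) (h : ℝ → ℝ) : expDecayIntegral γ h 0 = 0 :=
  intervalIntegral.integral_same

theorem const_mul (γ c : ℝ) (h : ℝ → ℝ) (t : ℝ) :
    expDecayIntegral γ (fun v => c * h v) t = c * expDecayIntegral γ h t := by
  simp only [expDecayIntegral, mul_assoc, intervalIntegral.integral_const_mul]

theorem intervalIntegrable (hh : ContinuousOn h (Ici 0)) (ht : 0 ≤ t) :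
    IntervalIntegrable (fun v => h v * Real.exp (-(γ * (t - v)))) MeasureTheory.volume 0 t :=
  ((hh.mono Icc_subset_Ici_self).mul (by fun_prop)).intervalIntegrable_of_Icc ht

theorem continuousOn (hh : ContinuousOn h (Ici 0)) : ContinuousOn (expDecayIntegral γ h) (Ici 0) := by
  simp only [funext (eq_exp_mul_integral γ h)]
  exact (by fun_prop : Continuous fun t => Real.exp (-(γ * t))).continuousOn.mul
    (hh.mul (by fun_prop)).continuousOn_primitive_Ici

theorem pos (hh : ContinuousOn h (Ici 0)) (hpos : ∀ v, 0 ≤ v → 0 < h v) (ht : 0 < t) :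
    0 < expDecayIntegral γ h t :=
  intervalIntegral.intervalIntegral_pos_of_pos_on (intervalIntegrable hh ht.le)
    (fun v hv => mul_pos (hpos v hv.1.le) (Real.exp_pos _)) ht

theorem mono (hh : ContinuousOn h (Ici 0)) (hk : ContinuousOn k (Ici 0))
    (hle : ∀ v, 0 ≤ v → h v ≤ k v) (ht : 0 ≤ t) :
    expDecayIntegral γ h t ≤ expDecayIntegral γ k t :=
  intervalIntegral.integral_mono_on ht (intervalIntegrable hh ht) (intervalIntegrable hk ht)
    fun v hv => mul_le_mul_of_nonneg_right (hle v hv.1) (Real.exp_pos _).le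

theorem div_le_inv_mul {P : ℝ → ℝ} {P₀ : ℝ} (hP₀ : 0 < P₀) (hP : ∀ v, 0 ≤ v → P₀ ≤ P v)
    (hh : ContinuousOn h (Ici 0)) (hh₀ : ∀ v, 0 ≤ v → 0 ≤ h v)
    (hhP : ContinuousOn (fun v => h v / P v) (Ici 0)) (ht : 0 ≤ t) :
    expDecayIntegral γ (fun v => h v / P v) t ≤ P₀⁻¹ * expDecayIntegral γ h t := by
  rw [← const_mul]
  refine mono hhP (continuousOn_const.mul hh) (fun v hv => ?_) ht
  rw [inv_mul_eq_div]
  exact div_le_div_of_nonneg_left (hh₀ v hv) hP₀ (hP v hv)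

end expDecayIntegral

theorem price_peak_exists_general
    (β γ P₀ : ℝ) (hβ : 0 < β) (hP₀ : 0 < P₀)
    (I S P : ℝ → ℝ)
    (hIc : ContinuousOn I (Set.Ici 0))
    (hSc : ContinuousOn S (Set.Ici 0))
    (hIS : ∀ v, 0 ≤ v → 0 < I v * S v)
    (hIlim : Tendsto I atTop (𝓝 0))
    (hbound : ∀ t, 0 ≤ t →
      β * (∫ v in (0:ℝ)..t, I v * S v * Real.exp (-(γ * (t - v)))) ≤ I t)
    (hPc : ContinuousOn P (Set.Ici 0))
    (hP : ∀ v, 0 ≤ v → P₀ ≤ P v)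
    (X_I : ℝ → ℝ)
    (hX : ∀ t, X_I t = β * ∫ v in (0:ℝ)..t,
        (I v * S v / P v) * Real.exp (-(γ * (t - v)))) :
    X_I 0 = 0 ∧
    (∀ t, 0 < t → 0 < X_I t) ∧
    Tendsto X_I atTop (𝓝 0) ∧
    ∃ tP : ℝ, 0 < tP ∧ 0 < X_I tP ∧ (∀ t, 0 ≤ t → X_I t ≤ X_I tP) ∧
      ∀ ψ : ℝ → ℝ, StrictMono ψ → Continuous ψ → ψ 0 = P₀ →
        ψ (X_I 0) = P₀ ∧
        P₀ < ψ (X_I tP) ∧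
        (∀ t, 0 ≤ t → ψ (X_I t) ≤ ψ (X_I tP)) ∧
        Tendsto (fun t => ψ (X_I t)) atTop (𝓝 P₀) := by
  have hX' : X_I = fun t => β * expDecayIntegral γ (fun v => I v * S v / P v) t := funext hX
  have hISc : ContinuousOn (fun v => I v * S v) (Ici 0) := hIc.mul hSc
  have hISPc : ContinuousOn (fun v => I v * S v / P v) (Ici 0) :=
    hISc.div hPc fun v hv => (hP₀.trans_le (hP v hv)).ne'
  have hX0 : X_I 0 = 0 := by simp [hX']
  have hXpos : ∀ t, 0 < t → 0 < X_I t := fun t ht => hX' ▸ mul_pos hβ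
    (expDecayIntegral.pos hISPc (fun v hv => div_pos (hIS v hv) (hP₀.trans_le (hP v hv))) ht)
  have hXle : ∀ t, 0 ≤ t → X_I t ≤ P₀⁻¹ * I t := fun t ht => calc
    X_I t ≤ β * (P₀⁻¹ * expDecayIntegral γ (fun v => I v * S v) t) := hX' ▸
      mul_le_mul_of_nonneg_left (expDecayIntegral.div_le_inv_mul hP₀ hP hISc
        (fun v hv => (hIS v hv).le) hISPc ht) hβ.le
    _ = P₀⁻¹ * (β * expDecayIntegral γ (fun v => I v * S v) t) := by ring
    _ ≤ P₀⁻¹ * I t := mul_le_mul_of_nonneg_left (hbound t ht) (inv_pos.2 hP₀).le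
  have hXlim : Tendsto X_I atTop (𝓝 0) := by
    refine tendsto_of_tendsto_of_tendsto_of_le_of_le' tendsto_const_nhds
      (by simpa using hIlim.const_mul P₀⁻¹) ?_ ?_ <;>
      filter_upwards [eventually_ge_atTop 0] with t ht
    · rcases ht.eq_or_lt with rfl | ht
      exacts [hX0.ge, (hXpos t ht).le]
    · exact hXle t ht
  have hXc : ContinuousOn X_I (Ici 0) :=
    hX' ▸ continuousOn_const.mul (expDecayIntegral.continuousOn hISPc)
  obtain ⟨tP, htP, hmax⟩ := hXc.exists_isMaxOn_Ici_of_tendsto hXlim zero_le_one (hXpos 1 one_pos)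
  have hXtP : 0 < X_I tP := (hXpos 1 one_pos).trans_le (hmax (mem_Ici.2 zero_le_one))
  have htP_pos : 0 < tP := (mem_Ici.1 htP).lt_of_ne fun h => hXtP.ne' (h ▸ hX0)
  refine ⟨hX0, hXpos, hXlim, tP, htP_pos, hXtP, fun t ht => hmax ht, ?_⟩
  intro ψ hψ hψc hψ0
  refine ⟨by rw [hX0, hψ0], hψ0 ▸ hψ hXtP, fun t ht => hψ.monotone (hmax ht), ?_⟩
  rw [← hψ0]
  exact (hψc.tendsto 0).comp hXlim

/-- existence of the price peak, part of Proposition 1.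
The holdings `X_I t = β·∫₀ᵗ (I v·S v / P v)·e^{-γ(t-v)} dv` start at `0`, are
positive for `t > 0`, vanish in the limit, and attain a global maximum over
`[0,∞)` at some `t*_P > 0`; hence for any strictly increasing continuous
inverse excess-supply `ψ` with `ψ 0 = P₀`, the price path `ψ (X_I t)` starts
at `P₀`, attains a global maximum strictly above `P₀` at `t*_P`, and returns
to `P₀` in the long run. -/
theorem price_peak_exists
    (β γ P₀ : ℝ) (hβ : 0 < β) (hγ : 0 < γ) (hP₀ : 0 < P₀)
    (I S P : ℝ → ℝ)
    (hIc : ContinuousOn I (Set.Ici 0))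
    (hSc : ContinuousOn S (Set.Ici 0))
    (hIS : ∀ v, 0 ≤ v → 0 < I v * S v)
    (hIlim : Tendsto I atTop (𝓝 0))
    (hbound : ∀ t, 0 ≤ t →
      β * (∫ v in (0:ℝ)..t, I v * S v * Real.exp (-(γ * (t - v)))) ≤ I t)
    (hPc : ContinuousOn P (Set.Ici 0))
    (hP : ∀ v, 0 ≤ v → P₀ ≤ P v)
    (X_I : ℝ → ℝ)
    (hX : ∀ t, X_I t = β * ∫ v in (0:ℝ)..t,
        (I v * S v / P v) * Real.exp (-(γ * (t - v)))) :
    X_I 0 = 0 ∧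
    (∀ t, 0 < t → 0 < X_I t) ∧
    Tendsto X_I atTop (𝓝 0) ∧
    ∃ tP : ℝ, 0 < tP ∧ 0 < X_I tP ∧ (∀ t, 0 ≤ t → X_I t ≤ X_I tP) ∧
      ∀ ψ : ℝ → ℝ, StrictMono ψ → Continuous ψ → ψ 0 = P₀ →
        ψ (X_I 0) = P₀ ∧
        P₀ < ψ (X_I tP) ∧
        (∀ t, 0 ≤ t → ψ (X_I t) ≤ ψ (X_I tP)) ∧
        Tendsto (fun t => ψ (X_I t)) atTop (𝓝 P₀) :=
  price_peak_exists_general β γ P₀ hβ hP₀ I S P hIc hSc hIS hIlim hbound hPc hP X_I hX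
end
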